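/- Fix a > 0 and λ, t, ζ ∈ ℝ with t > 0. Let Φ(x) = ∫_{-∞}^x (2π)^{-1/2} e^{-y²/2} dy. Then there exists a constant c depending only on a, λ, t such that ∫₀^∞ Φ((λ − (a/2)t − x − ζ)/√t) · a e^{2ax} dx ≤ c e^{-ζ²/(4(t+1))} for all ζ ≥ 0. -/
import Mathlib
open MeasureTheory Real Set

lemma gauss_integrable : Integrable (fun y : ℝ => Real.exp (-y ^ 2 / 2) / Real.sqrt (2 * Real.pi)) := by
  have h : Integrable (fun y : ℝ => Real.exp (-(1/2) * y ^ 2)) := integrable_exp_neg_mul_sq (by norm_num)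
  have := h.div_const (Real.sqrt (2 * Real.pi))
  convert this using 2 with y
  ring_nf

lemma Phi_nonneg (v : ℝ) :
    0 ≤ ∫ y in Iio v, Real.exp (-y ^ 2 / 2) / Real.sqrt (2 * Real.pi) :=
  integral_nonneg (fun y => div_nonneg (Real.exp_nonneg _) (Real.sqrt_nonneg _))

lemma Phi_le_one (v : ℝ) :
    (∫ y in Iio v, Real.exp (-y ^ 2 / 2) / Real.sqrt (2 * Real.pi)) ≤ 1 := by
  have h1 : (∫ y in Iio v, Real.exp (-y ^ 2 / 2) / Real.sqrt (2 * Real.pi))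
      ≤ ∫ y : ℝ, Real.exp (-y ^ 2 / 2) / Real.sqrt (2 * Real.pi) := by
    exact setIntegral_le_integral gauss_integrable
      (Filter.Eventually.of_forall fun y => div_nonneg (Real.exp_nonneg _) (Real.sqrt_nonneg _))
  have h2 : (∫ y : ℝ, Real.exp (-y ^ 2 / 2) / Real.sqrt (2 * Real.pi)) = 1 := by
    rw [integral_div]
    have : (∫ y : ℝ, Real.exp (-y ^ 2 / 2)) = Real.sqrt (2 * Real.pi) := by
      have h := integral_gaussian (1/2)
      have e1 : (∫ y : ℝ, Real.exp (-y ^ 2 / 2)) = ∫ x : ℝ, Real.exp (-(1/2) * x ^ 2) := by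
        congr 1 with y; ring_nf
      rw [e1, h]
      rw [show Real.pi / (1/2) = 2 * Real.pi by ring]
    rw [this, div_self (by positivity)]
  linarith

lemma Phi_tail {v : ℝ} (hv : v ≤ 0) :
    (∫ y in Iio v, Real.exp (-y ^ 2 / 2) / Real.sqrt (2 * Real.pi))
      ≤ Real.exp (1/2) * Real.exp (-v ^ 2 / 2) := by
  rcases le_or_gt (-1) v with h1 | h1
  · calc (∫ y in Iio v, Real.exp (-y ^ 2 / 2) / Real.sqrt (2 * Real.pi)) ≤ 1 := Phi_le_one v
    _ ≤ Real.exp (1/2) * Real.exp (-v ^ 2 / 2) := by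
        rw [← Real.exp_add]
        have h0 : (0:ℝ) ≤ 1/2 + -v^2/2 := by nlinarith
        calc (1:ℝ) = Real.exp 0 := by simp
        _ ≤ _ := Real.exp_le_exp.mpr h0
  · -- v < -1
    have hint : IntegrableOn (fun y => Real.exp (-v ^ 2 / 2) * Real.exp (y - v) / Real.sqrt (2 * Real.pi)) (Iio v) := by
      have h0 : IntegrableOn (fun y : ℝ => Real.exp y) (Iio v) :=
        (integrableOn_exp_Iic v).mono_set Iio_subset_Iic_self
      have h2 : IntegrableOn (fun y : ℝ => Real.exp (-v ^ 2 / 2) * (Real.exp y * Real.exp (-v)) / Real.sqrt (2 * Real.pi)) (Iio v) :=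
        ((h0.mul_const (Real.exp (-v))).const_mul (Real.exp (-v ^ 2 / 2))).div_const (Real.sqrt (2 * Real.pi))
      have heq : ∀ y : ℝ, Real.exp (-v ^ 2 / 2) * (Real.exp y * Real.exp (-v)) / Real.sqrt (2 * Real.pi)
          = Real.exp (-v ^ 2 / 2) * Real.exp (y - v) / Real.sqrt (2 * Real.pi) := by
        intro y; rw [Real.exp_sub, Real.exp_neg]; ring
      simpa only [heq] using h2
    have key : (∫ y in Iio v, Real.exp (-y ^ 2 / 2) / Real.sqrt (2 * Real.pi))
        ≤ ∫ y in Iio v, Real.exp (-v ^ 2 / 2) * Real.exp (y - v) / Real.sqrt (2 * Real.pi) := by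
      apply setIntegral_mono_on gauss_integrable.integrableOn hint measurableSet_Iio
      intro y hy
      have hy' : y < v := hy
      apply div_le_div_of_nonneg_right ?_ ?_ |>.trans_eq rfl
      · rw [← Real.exp_add]
        apply Real.exp_le_exp.mpr
        nlinarith
      · positivity
    have comp : (∫ y in Iio v, Real.exp (-v ^ 2 / 2) * Real.exp (y - v) / Real.sqrt (2 * Real.pi))
        = Real.exp (-v ^ 2 / 2) / Real.sqrt (2 * Real.pi) * ∫ y in Iio v, Real.exp (y - v) := by
      rw [← integral_const_mul]
      congr 1 with y
      ring
    have expint : (∫ y in Iio v, Real.exp (y - v)) = 1 := by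
      have : (∫ y in Iio v, Real.exp (y - v)) = ∫ y in Iio v, Real.exp y * Real.exp (-v) := by
        congr 1 with y; rw [← Real.exp_add]; ring_nf
      rw [this, integral_mul_const, ← integral_Iic_eq_integral_Iio, integral_exp_Iic, ← Real.exp_add]
      simp
    have hsq : (1:ℝ) ≤ Real.sqrt (2 * Real.pi) := by
      rw [Real.one_le_sqrt]
      nlinarith [Real.pi_gt_three]
    calc (∫ y in Iio v, Real.exp (-y ^ 2 / 2) / Real.sqrt (2 * Real.pi))
        ≤ Real.exp (-v ^ 2 / 2) / Real.sqrt (2 * Real.pi) := by rw [expint, mul_one] at comp; linarith [key]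
    _ ≤ Real.exp (-v ^ 2 / 2) := by
        apply div_le_self (Real.exp_nonneg _) hsq
    _ ≤ Real.exp (1/2) * Real.exp (-v ^ 2 / 2) := by
        nlinarith [Real.one_le_exp (by norm_num : (0:ℝ) ≤ 1/2), Real.exp_nonneg (-v ^ 2 / 2)]

lemma Phi_bound (b t : ℝ) (ht : 0 < t) (p : ℝ) (hp : 0 ≤ p) :
    (∫ y in Iio ((b - p) / Real.sqrt t), Real.exp (-y ^ 2 / 2) / Real.sqrt (2 * Real.pi))
      ≤ Real.exp (1/2 + b ^ 2 / (2 * t)) * Real.exp (-p ^ 2 / (4 * t)) := by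
  have hst : (0:ℝ) < Real.sqrt t := Real.sqrt_pos.mpr ht
  rcases le_or_gt b p with hb | hb
  · have hv : (b - p) / Real.sqrt t ≤ 0 :=
      div_nonpos_of_nonpos_of_nonneg (by linarith) hst.le
    have h1 := Phi_tail hv
    have hv2 : ((b - p) / Real.sqrt t) ^ 2 = (b - p) ^ 2 / t := by
      rw [div_pow, Real.sq_sqrt ht.le]
    refine h1.trans ?_
    rw [← Real.exp_add, ← Real.exp_add, Real.exp_le_exp, hv2]
    have hdiff : (1/2 + b ^ 2 / (2 * t) + -p ^ 2 / (4 * t)) - (1/2 + -((b - p) ^ 2 / t) / 2)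
        = (p - 2 * b) ^ 2 / (4 * t) := by
      field_simp
      ring
    nlinarith [div_nonneg (sq_nonneg (p - 2 * b)) (by linarith : (0:ℝ) ≤ 4 * t)]
  · refine (Phi_le_one _).trans ?_
    rw [← Real.exp_add]
    calc (1:ℝ) = Real.exp 0 := by simp
    _ ≤ _ := by
        apply Real.exp_le_exp.mpr
        have hdiff : 1/2 + b ^ 2 / (2 * t) + -p ^ 2 / (4 * t) = 1/2 + (2 * b ^ 2 - p ^ 2) / (4 * t) := by
          field_simp; ring
        have hnum : (0:ℝ) ≤ 2 * b ^ 2 - p ^ 2 := by nlinarith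
        have h3 := div_nonneg hnum (by linarith : (0:ℝ) ≤ 4 * t)
        rw [hdiff]
        linarith

/-- Gaussian-tail bound for the boundary integral: with `Φ` the standard normal CDF,
`∫₀^∞ Φ((λ - (a/2)t - x - ζ)/√t) a e^{2ax} dx ≤ c e^{-ζ²/(4(t+1))}` for all `ζ ≥ 0`. -/
theorem gaussian_cdf_weighted_integral_bound (a lam t : ℝ) (ha : 0 < a) (ht : 0 < t) :
    ∃ c : ℝ, 0 < c ∧ ∀ ζ : ℝ, 0 ≤ ζ →
      (∫ x in Set.Ioi (0:ℝ),
          (∫ y in Set.Iio ((lam - a / 2 * t - x - ζ) / Real.sqrt t),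
            Real.exp (-y ^ 2 / 2) / Real.sqrt (2 * Real.pi)) * (a * Real.exp (2 * a * x)))
        ≤ c * Real.exp (-ζ ^ 2 / (4 * (t + 1))) := by
  set b := lam - a / 2 * t with hb
  set K := Real.exp (1/2 + b ^ 2 / (2 * t)) with hK
  -- integrability of the dominating function
  have hint : Integrable (fun x : ℝ => a * Real.exp (2 * a * x - x ^ 2 / (4 * t))) := by
    have h0 : Integrable (fun x : ℝ => Real.exp (-(1/(4*t)) * x ^ 2)) :=
      integrable_exp_neg_mul_sq (by positivity)
    have h1 : Integrable (fun x : ℝ => Real.exp (-(1/(4*t)) * (x - 4*a*t) ^ 2)) :=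
      h0.comp_sub_right (4*a*t)
    have h2 := (h1.const_mul (Real.exp (4*a^2*t))).const_mul a
    have heq : ∀ x : ℝ, a * (Real.exp (4*a^2*t) * Real.exp (-(1/(4*t)) * (x - 4*a*t) ^ 2))
        = a * Real.exp (2 * a * x - x ^ 2 / (4 * t)) := by
      intro x
      rw [← Real.exp_add]
      congr 2
      field_simp
      ring
    simpa only [heq] using h2
  set C₂ := ∫ x in Set.Ioi (0:ℝ), a * Real.exp (2 * a * x - x ^ 2 / (4 * t)) with hC
  have hC₂ : 0 ≤ C₂ :=
    integral_nonneg fun x => by positivity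
  refine ⟨K * C₂ + 1, by positivity, fun ζ hζ => ?_⟩
  set E := Real.exp (-ζ ^ 2 / (4 * (t + 1))) with hE
  have hEpos : 0 < E := Real.exp_pos _
  have main : (∫ x in Set.Ioi (0:ℝ),
          (∫ y in Set.Iio ((b - x - ζ) / Real.sqrt t),
            Real.exp (-y ^ 2 / 2) / Real.sqrt (2 * Real.pi)) * (a * Real.exp (2 * a * x)))
      ≤ ∫ x in Set.Ioi (0:ℝ), (E * K) * (a * Real.exp (2 * a * x - x ^ 2 / (4 * t))) := by
    apply integral_mono_of_nonneg
    · exact Filter.Eventually.of_forall fun x =>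
        mul_nonneg (Phi_nonneg _) (by positivity)
    · exact ((hint.const_mul (E * K)).integrableOn)
    · rw [Filter.EventuallyLE, ae_restrict_iff' measurableSet_Ioi]
      apply Filter.Eventually.of_forall
      intro x hx
      have hx0 : (0:ℝ) < x := hx
      have hp : 0 ≤ x + ζ := by linarith
      have h1 := Phi_bound b t ht (x + ζ) hp
      have harg : b - x - ζ = b - (x + ζ) := by ring
      rw [harg]
      have h2 : Real.exp (-(x + ζ) ^ 2 / (4 * t)) ≤ Real.exp (-x ^ 2 / (4 * t)) * E := by
        rw [hE, ← Real.exp_add, Real.exp_le_exp]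
        have hfact : -x ^ 2 / (4 * t) + -ζ ^ 2 / (4 * (t + 1)) - (-(x + ζ) ^ 2 / (4 * t))
            = (2 * x * ζ * (t + 1) + ζ ^ 2) / (4 * t * (t + 1)) := by
          field_simp
          ring
        have hnum : (0:ℝ) ≤ 2 * x * ζ * (t + 1) + ζ ^ 2 := by positivity
        have := div_nonneg hnum (by positivity : (0:ℝ) ≤ 4 * t * (t + 1))
        linarith [hfact ▸ this]
      calc (∫ y in Set.Iio ((b - (x + ζ)) / Real.sqrt t),
            Real.exp (-y ^ 2 / 2) / Real.sqrt (2 * Real.pi)) * (a * Real.exp (2 * a * x))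
          ≤ (K * Real.exp (-(x + ζ) ^ 2 / (4 * t))) * (a * Real.exp (2 * a * x)) := by
            apply mul_le_mul_of_nonneg_right h1 (by positivity)
      _ ≤ (K * (Real.exp (-x ^ 2 / (4 * t)) * E)) * (a * Real.exp (2 * a * x)) := by
            apply mul_le_mul_of_nonneg_right ?_ (by positivity)
            exact mul_le_mul_of_nonneg_left h2 (Real.exp_nonneg _)
      _ = (E * K) * (a * Real.exp (2 * a * x - x ^ 2 / (4 * t))) := by
            rw [show 2 * a * x - x ^ 2 / (4 * t) = 2 * a * x + -x ^ 2 / (4 * t) by ring,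
              Real.exp_add]
            ring
  have hrhs : (∫ x in Set.Ioi (0:ℝ), (E * K) * (a * Real.exp (2 * a * x - x ^ 2 / (4 * t))))
      = E * K * C₂ := by
    rw [hC, ← integral_const_mul]
  calc (∫ x in Set.Ioi (0:ℝ),
          (∫ y in Set.Iio ((lam - a / 2 * t - x - ζ) / Real.sqrt t),
            Real.exp (-y ^ 2 / 2) / Real.sqrt (2 * Real.pi)) * (a * Real.exp (2 * a * x)))
      ≤ E * K * C₂ := by rw [← hrhs]; exact main
  _ ≤ (K * C₂ + 1) * E := by nlinarith [Real.exp_pos (1/2 + b ^ 2 / (2 * t))]
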